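/- If there exist a k-SCHGDD of type (n, (gw)^t) and a k-SCHGDD of type (n, g^w), then there exists a k-SCHGDD of type (n, g^{wt}). -/

import Mathlib

/-- The multiset of differences `Δ_{ij}(B)`: for each base block `b ∈ B`, all differences
`x − y` over ordered pairs of distinct points `(i,x), (j,y) ∈ b`. -/
def blockDelta {n M : ℕ} (B : Multiset (Finset (Fin n × ZMod M))) (i j : Fin n) :
    Multiset (ZMod M) :=
  B.bind (fun b =>
    ((b.val ×ˢ b.val).filter (fun p => p.1.1 = i ∧ p.2.1 = j ∧ p.1 ≠ p.2)).map
      (fun p => p.1.2 - p.2.2))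

/-- The subgroup `S = {0, t, …, (m−1)t}` of `Z_{mt}` as a multiset. -/
def holeMultiples (m t : ℕ) : Multiset (ZMod (m * t)) :=
  (Multiset.range m).map (fun c => ((c * t : ℕ) : ZMod (m * t)))

/-- The multiset `Z_{mt} \ S`, each element once. -/
def nonHoleDiffs (m t : ℕ) : Multiset (ZMod (m * t)) :=
  ((Multiset.range (m * t)).map (fun z => (z : ZMod (m * t)))).filter
    (fun z => z ∉ holeMultiples m t)

/-- A semi-cyclic `k`-HGDD of type `(n, m^t)`, given by its multiset `B` of base blocks
(`k`-subsets of `I_n × Z_{mt}`): developing by `+1` on second coordinates yields a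
`k`-HGDD with groups `{i} × Z_{mt}` and holes `I_n × (S + l)`; equivalently,
`Δ_{ij}(B) = Z_{mt} \ S` for `i ≠ j` and `Δ_{ii}(B) = ∅`. -/
def IsSCHGDD (k n m t : ℕ) (B : Multiset (Finset (Fin n × ZMod (m * t)))) : Prop :=
  (∀ b ∈ B, b.card = k) ∧
  (∀ i j : Fin n, i ≠ j → blockDelta B i j = nonHoleDiffs m t) ∧
  (∀ i : Fin n, blockDelta B i i = 0)

/-! The non-hole differences of type `(n, g^{wt})` are the residues of `Z_{gwt}` not divisible
by `wt`. They split into those not divisible by `t`, which are exactly the differences covered by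
the design of type `(n, (gw)^t)`, and `t` times the residues of `Z_{gw}` not divisible by `w`,
which are covered by the image of the design of type `(n, g^w)` under the injective homomorphism
`x ↦ t x : Z_{gw} → Z_{gwt}`. Relabelling points by an injective homomorphism maps difference
multisets accordingly, so the union of the two relabelled base-block families is the required
design. When `gwt = 0` every non-hole difference multiset is empty and the first design alone
suffices. -/

section Relabel

variable {n M M' : ℕ}

def relabelBlocks (φ : ZMod M →+ ZMod M') (B : Multiset (Finset (Fin n × ZMod M))) :
    Multiset (Finset (Fin n × ZMod M')) :=
  B.map (Finset.image (Prod.map id φ))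

variable {φ : ZMod M →+ ZMod M'}

lemma card_of_mem_relabelBlocks (hφ : Function.Injective φ)
    {B : Multiset (Finset (Fin n × ZMod M))} {k : ℕ} (hB : ∀ a ∈ B, a.card = k)
    {b : Finset (Fin n × ZMod M')} (hb : b ∈ relabelBlocks φ B) :
    b.card = k := by
  obtain ⟨a, ha, rfl⟩ := Multiset.mem_map.mp hb
  rw [Finset.card_image_of_injective _ (Function.injective_id.prodMap hφ), hB a ha]

lemma blockDelta_relabelBlocks (hφ : Function.Injective φ)
    (B : Multiset (Finset (Fin n × ZMod M))) (i j : Fin n) :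
    blockDelta (relabelBlocks φ B) i j = (blockDelta B i j).map φ := by
  simp only [blockDelta, relabelBlocks, Multiset.bind_map, Multiset.map_bind]
  refine Multiset.bind_congr fun b _ => ?_
  set e : Fin n × ZMod M ↪ Fin n × ZMod M' :=
    ⟨Prod.map id φ, Function.injective_id.prodMap hφ⟩
  rw [show b.image (Prod.map id φ) = b.map e from (Finset.map_eq_image e b).symm,
    ← Finset.product_val, ← Finset.product_val, ← Finset.prodMap_map_product, Finset.map_val,
    Multiset.filter_map, Multiset.map_map, Multiset.map_map]
  refine Multiset.map_congr (Multiset.filter_congr fun p _ => ?_) fun p _ => ?_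
  · show _ ∧ _ ∧ e p.1 ≠ e p.2 ↔ _
    rw [e.injective.ne_iff]
    rfl
  · simp [e]

lemma blockDelta_add (B₁ B₂ : Multiset (Finset (Fin n × ZMod M))) (i j : Fin n) :
    blockDelta (B₁ + B₂) i j = blockDelta B₁ i j + blockDelta B₂ i j :=
  Multiset.add_bind _ _ _

end Relabel

section NonHoleDiffs

variable {m t : ℕ}

-- `nonHoleDiffs` elaborates its `map` through the `Multiset` monad; this is the intended form.
lemma nonHoleDiffs_eq_filter (m t : ℕ) : nonHoleDiffs m t =
    ((Multiset.range (m * t)).map (fun a : ℕ => (a : ZMod (m * t)))).filter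
      (· ∉ holeMultiples m t) := by
  simp only [nonHoleDiffs, Multiset.map_id', Multiset.bind_def, Multiset.pure_def,
    Multiset.bind_singleton]

lemma nonHoleDiffs_eq_zero (h : m * t = 0) : nonHoleDiffs m t = 0 :=
  Multiset.eq_zero_of_forall_notMem fun z hz => by simp [nonHoleDiffs, h] at hz

lemma nodup_nonHoleDiffs (m t : ℕ) : (nonHoleDiffs m t).Nodup := by
  rw [nonHoleDiffs_eq_filter]
  refine ((Multiset.nodup_range _).map_on fun x hx y hy hxy => ?_).filter _
  rw [Multiset.mem_range] at hx hy
  simpa [ZMod.val_cast_of_lt hx, ZMod.val_cast_of_lt hy] using congrArg ZMod.val hxy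

lemma mem_holeMultiples [NeZero (m * t)] (z : ZMod (m * t)) :
    z ∈ holeMultiples m t ↔ t ∣ z.val := by
  have ht : 0 < t := Nat.pos_of_ne_zero (right_ne_zero_of_mul (NeZero.ne (m * t)))
  simp only [holeMultiples, Multiset.mem_map, Multiset.mem_range]
  constructor
  · rintro ⟨c, hc, rfl⟩
    rw [ZMod.val_cast_of_lt (Nat.mul_lt_mul_of_pos_right hc ht)]
    exact dvd_mul_left t c
  · rintro ⟨u, hu⟩
    have hlt : u * t < m * t := by simpa [hu, mul_comm] using ZMod.val_lt z
    refine ⟨u, Nat.lt_of_mul_lt_mul_right hlt, ?_⟩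
    rw [mul_comm u t, ← hu, ZMod.natCast_zmod_val]

lemma mem_nonHoleDiffs [NeZero (m * t)] (z : ZMod (m * t)) :
    z ∈ nonHoleDiffs m t ↔ ¬ t ∣ z.val := by
  have hz : z ∈ (Multiset.range (m * t)).map (fun a : ℕ => (a : ZMod (m * t))) :=
    Multiset.mem_map.mpr ⟨z.val, Multiset.mem_range.mpr z.val_lt, ZMod.natCast_zmod_val z⟩
  rw [nonHoleDiffs_eq_filter, Multiset.mem_filter, mem_holeMultiples]
  exact and_iff_right hz

end NonHoleDiffs

section Scale

variable {m N : ℕ}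

def scaleHom (t : ℕ) (h : m * t = N) : ZMod m →+ ZMod N :=
  ZMod.lift m ⟨(AddMonoidHom.mulRight (t : ZMod N)).comp (Int.castAddHom (ZMod N)), by
    simp [← Nat.cast_mul, h]⟩

lemma scaleHom_natCast (t : ℕ) (h : m * t = N) (v : ℕ) :
    scaleHom t h (v : ZMod m) = ((v * t : ℕ) : ZMod N) := by
  rw [← Int.cast_natCast, scaleHom, ZMod.lift_coe]
  simp

lemma val_scaleHom [NeZero N] (t : ℕ) (h : m * t = N) (x : ZMod m) :
    (scaleHom t h x).val = x.val * t := by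
  have : NeZero m := ⟨left_ne_zero_of_mul (h ▸ NeZero.ne N)⟩
  have ht : 0 < t := Nat.pos_of_ne_zero (right_ne_zero_of_mul (h ▸ NeZero.ne N))
  rw [← ZMod.natCast_zmod_val x, scaleHom_natCast, ZMod.val_cast_of_lt x.val_lt,
    ZMod.val_cast_of_lt (h ▸ Nat.mul_lt_mul_of_pos_right x.val_lt ht)]

lemma scaleHom_injective [NeZero N] (t : ℕ) (h : m * t = N) :
    Function.Injective (scaleHom t h) := by
  have : NeZero m := ⟨left_ne_zero_of_mul (h ▸ NeZero.ne N)⟩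
  have ht : t ≠ 0 := right_ne_zero_of_mul (h ▸ NeZero.ne N)
  intro x y hxy
  have := congrArg ZMod.val hxy
  rw [val_scaleHom, val_scaleHom] at this
  exact ZMod.val_injective m (Nat.eq_of_mul_eq_mul_right (Nat.pos_of_ne_zero ht) this)

end Scale

section Filling

variable {g w t N : ℕ} [NeZero N]

lemma mem_map_ringEquivCongr_nonHoleDiffs {m : ℕ} (h : m * t = N) (z : ZMod N) :
    z ∈ (nonHoleDiffs m t).map (ZMod.ringEquivCongr h) ↔ ¬ t ∣ z.val := by
  have : NeZero (m * t) := ⟨h ▸ NeZero.ne N⟩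
  rw [← (ZMod.ringEquivCongr h).apply_symm_apply z,
    Multiset.mem_map_of_injective (ZMod.ringEquivCongr h).injective, mem_nonHoleDiffs,
    ZMod.ringEquivCongr_val]

lemma mem_map_scaleHom_nonHoleDiffs (h : g * w * t = N) (z : ZMod N) :
    z ∈ (nonHoleDiffs g w).map (scaleHom t h) ↔ t ∣ z.val ∧ ¬ w * t ∣ z.val := by
  have : NeZero (g * w) := ⟨left_ne_zero_of_mul (h ▸ NeZero.ne N)⟩
  have ht : 0 < t := Nat.pos_of_ne_zero (right_ne_zero_of_mul (h ▸ NeZero.ne N))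
  rw [Multiset.mem_map]
  constructor
  · rintro ⟨x, hx, rfl⟩
    rw [val_scaleHom, Nat.mul_dvd_mul_iff_right ht]
    exact ⟨dvd_mul_left t _, (mem_nonHoleDiffs x).mp hx⟩
  · rintro ⟨⟨u, hu⟩, hwt⟩
    rw [mul_comm] at hu
    have hlt : u < g * w := Nat.lt_of_mul_lt_mul_right (h ▸ hu ▸ z.val_lt)
    have hx : scaleHom t h u = z :=
      ZMod.val_injective N (by rw [val_scaleHom, ZMod.val_cast_of_lt hlt, hu])
    refine ⟨u, ?_, hx⟩
    rwa [mem_nonHoleDiffs, ZMod.val_cast_of_lt hlt, ← Nat.mul_dvd_mul_iff_right ht, ← hu]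

lemma nonHoleDiffs_mul_right [NeZero (g * (w * t))] :
    nonHoleDiffs g (w * t) =
      (nonHoleDiffs (g * w) t).map (ZMod.ringEquivCongr (mul_assoc g w t)) +
        (nonHoleDiffs g w).map (scaleHom t (mul_assoc g w t)) := by
  have hdisj : Disjoint ((nonHoleDiffs (g * w) t).map (ZMod.ringEquivCongr (mul_assoc g w t)))
      ((nonHoleDiffs g w).map (scaleHom t (mul_assoc g w t))) :=
    Multiset.disjoint_left.mpr fun hz₁ hz₂ =>
      (mem_map_ringEquivCongr_nonHoleDiffs _ _).mp hz₁
        ((mem_map_scaleHom_nonHoleDiffs _ _).mp hz₂).1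
  refine (Multiset.Nodup.ext (nodup_nonHoleDiffs _ _) ?_).mpr fun z => ?_
  · exact Multiset.nodup_add.mpr ⟨(nodup_nonHoleDiffs _ _).map (ZMod.ringEquivCongr _).injective,
      (nodup_nonHoleDiffs _ _).map (scaleHom_injective _ _), hdisj⟩
  · rw [mem_nonHoleDiffs, Multiset.mem_add, mem_map_ringEquivCongr_nonHoleDiffs,
      mem_map_scaleHom_nonHoleDiffs]
    by_cases ht : t ∣ z.val
    · simp [ht]
    · simpa [ht] using fun hwt => ht ((dvd_mul_left t w).trans hwt)

end Filling

namespace IsSCHGDD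

variable {k n g w t : ℕ} {B₁ : Multiset (Finset (Fin n × ZMod (g * w * t)))}
  {B₂ : Multiset (Finset (Fin n × ZMod (g * w)))}

theorem filling [NeZero (g * (w * t))] (hB₁ : IsSCHGDD k n (g * w) t B₁)
    (hB₂ : IsSCHGDD k n g w B₂) :
    IsSCHGDD k n g (w * t)
      (relabelBlocks (ZMod.ringEquivCongr (mul_assoc g w t) : ZMod (g * w * t) →+ _) B₁ +
        relabelBlocks (scaleHom t (mul_assoc g w t)) B₂) := by
  have hcast := (ZMod.ringEquivCongr (mul_assoc g w t)).injective
  have hscale := scaleHom_injective t (mul_assoc g w t)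
  obtain ⟨hcard₁, hdiff₁, hzero₁⟩ := hB₁
  obtain ⟨hcard₂, hdiff₂, hzero₂⟩ := hB₂
  refine ⟨fun b hb => ?_, fun i j hij => ?_, fun i => ?_⟩
  · rcases Multiset.mem_add.mp hb with hb | hb
    exacts [card_of_mem_relabelBlocks hcast hcard₁ hb,
      card_of_mem_relabelBlocks hscale hcard₂ hb]
  · rw [blockDelta_add, blockDelta_relabelBlocks hcast, blockDelta_relabelBlocks hscale,
      hdiff₁ i j hij, hdiff₂ i j hij, AddMonoidHom.coe_coe, ← nonHoleDiffs_mul_right]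
  · rw [blockDelta_add, blockDelta_relabelBlocks hcast, blockDelta_relabelBlocks hscale, hzero₁,
      hzero₂, Multiset.map_zero, Multiset.map_zero, add_zero]

theorem filling_of_mul_eq_zero (hB₁ : IsSCHGDD k n (g * w) t B₁) (h : g * (w * t) = 0) :
    IsSCHGDD k n g (w * t)
      (relabelBlocks (ZMod.ringEquivCongr (mul_assoc g w t) : ZMod (g * w * t) →+ _) B₁) := by
  have hcast := (ZMod.ringEquivCongr (mul_assoc g w t)).injective
  obtain ⟨hcard, hdiff, hzero⟩ := hB₁
  refine ⟨fun b hb => card_of_mem_relabelBlocks hcast hcard hb, fun i j hij => ?_, fun i => ?_⟩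
  · rw [blockDelta_relabelBlocks hcast, hdiff i j hij,
      nonHoleDiffs_eq_zero ((mul_assoc g w t).trans h), nonHoleDiffs_eq_zero h, Multiset.map_zero]
  · rw [blockDelta_relabelBlocks hcast, hzero i, Multiset.map_zero]

end IsSCHGDD

/-- If there exist a `k`-SCHGDD of type `(n, (gw)^t)` and a `k`-SCHGDD of type `(n, g^w)`,
then there exists a `k`-SCHGDD of type `(n, g^{wt})`. -/
theorem schgdd_filling (k n g w t : ℕ)
    (h1 : ∃ B : Multiset (Finset (Fin n × ZMod (g * w * t))), IsSCHGDD k n (g * w) t B)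
    (h2 : ∃ B : Multiset (Finset (Fin n × ZMod (g * w))), IsSCHGDD k n g w B) :
    ∃ B : Multiset (Finset (Fin n × ZMod (g * (w * t)))), IsSCHGDD k n g (w * t) B := by
  obtain ⟨B₁, hB₁⟩ := h1
  obtain ⟨B₂, hB₂⟩ := h2
  rcases eq_or_ne (g * (w * t)) 0 with h | h
  · exact ⟨_, hB₁.filling_of_mul_eq_zero h⟩
  · have : NeZero (g * (w * t)) := ⟨h⟩
    exact ⟨_, hB₁.filling hB₂⟩
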